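/- Let d be a positive natural number, σ > 0, and for x ∈ ℝ^d let μ_x denote the isotropic Gaussian measure N(x, σ²I_d). Let S ⊆ ℝ^d be a measurable set, x, δ ∈ ℝ^d, and b ∈ ℝ. If μ_x(S) ≤ Φ(b), then μ_{x+δ}(S) ≤ Φ(b + ‖δ‖₂/σ). -/

import Mathlib

open MeasureTheory ProbabilityTheory Set
open scoped RealInnerProductSpace NNReal ENNReal

/-- The isotropic Gaussian measure `N(x, σ²I_d)` on `ℝ^d`. -/
noncomputable def gaussPi (d : ℕ) (σ : ℝ) (x : EuclideanSpace ℝ (Fin d)) :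
    Measure (EuclideanSpace ℝ (Fin d)) :=
  Measure.map (MeasurableEquiv.toLp 2 (Fin d → ℝ))
    (Measure.pi fun i => gaussianReal (x i) ⟨σ ^ 2, sq_nonneg σ⟩)

/-- The standard normal cumulative distribution function `Φ`. -/
noncomputable def stdNormalCDF (t : ℝ) : ℝ :=
  (gaussianReal 0 1 (Set.Iic t)).toReal

/-!
The likelihood ratio of `μ_{x+δ}` against `μ_x` is an increasing function of `⟪δ, z⟫`, so by the
Neyman–Pearson lemma the half-space `H = {z | t ≤ ⟪δ, z⟫}` with `μ_x(H) = Φ(b)` maximizes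
`μ_{x+δ}` among sets of `μ_x`-measure at most `Φ(b)`. Under `μ_x` and `μ_{x+δ}` the functional
`⟪δ, ·⟫` is normal with standard deviation `σ‖δ‖` and means differing by `‖δ‖²`, whence
`μ_{x+δ}(H) = Φ(b + ‖δ‖/σ)`.
-/

section NeymanPearson

variable {α : Type*} [MeasurableSpace α] {P : Measure α} {L : α → ℝ≥0∞} {S H : Set α}
  {c : ℝ≥0∞}

lemma measure_sdiff_le_measure_sdiff [IsFiniteMeasure P] (hS : MeasurableSet S)
    (hH : MeasurableSet H) (hSH : P S ≤ P H) : P (S \ H) ≤ P (H \ S) := by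
  rw [← measure_inter_add_sdiff S hH, ← measure_inter_add_sdiff H hS, inter_comm] at hSH
  exact (ENNReal.add_le_add_iff_left (measure_ne_top _ _)).mp hSH

/-- **Neyman–Pearson lemma.** -/
lemma withDensity_apply_le_of_superlevelSet [IsFiniteMeasure P] (hS : MeasurableSet S)
    (hH : MeasurableSet H) (hL_ge : ∀ z ∈ H, c ≤ L z) (hL_le : ∀ z ∉ H, L z ≤ c)
    (hSH : P S ≤ P H) : P.withDensity L S ≤ P.withDensity L H := by
  have outside : P.withDensity L (S \ H) ≤ c * P (S \ H) := by
    rw [withDensity_apply _ (hS.diff hH), ← setLIntegral_const]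
    exact setLIntegral_mono' (hS.diff hH) fun z hz => hL_le z hz.2
  have inside : c * P (H \ S) ≤ P.withDensity L (H \ S) := by
    rw [withDensity_apply _ (hH.diff hS), ← setLIntegral_const]
    exact setLIntegral_mono' (hH.diff hS) fun z hz => hL_ge z hz.1
  calc P.withDensity L S = P.withDensity L (S ∩ H) + P.withDensity L (S \ H) :=
        (measure_inter_add_sdiff S hH).symm
    _ ≤ P.withDensity L (S ∩ H) + c * P (H \ S) := by
        gcongr
        exact outside.trans (by gcongr c * ?_; exact measure_sdiff_le_measure_sdiff hS hH hSH)
    _ ≤ P.withDensity L (H ∩ S) + P.withDensity L (H \ S) := by rw [inter_comm]; gcongr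
    _ = P.withDensity L H := measure_inter_add_sdiff H hS

end NeymanPearson

lemma MeasurableEquiv.map_withDensity {α β : Type*} [MeasurableSpace α] [MeasurableSpace β]
    (e : α ≃ᵐ β) (μ : Measure α) {f : α → ℝ≥0∞} (hf : Measurable f) :
    (μ.withDensity f).map e = (μ.map e).withDensity (f ∘ e.symm) := by
  ext s hs
  rw [e.map_apply, withDensity_apply _ hs, withDensity_apply _ (e.measurable hs),
    setLIntegral_map hs (hf.comp e.symm.measurable) e.measurable]
  simp

section Pi

variable {ι : Type*} [Fintype ι] {α : ι → Type*}

lemma indicator_univ_pi_prod {M : Type*} [CommMonoidWithZero M] {f : ∀ i, α i → M}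
    (s : ∀ i, Set (α i)) (z : ∀ i, α i) :
    (univ.pi s).indicator (fun z => ∏ i, f i (z i)) z = ∏ i, (s i).indicator (f i) (z i) := by
  by_cases hz : z ∈ univ.pi s
  · rw [indicator_of_mem hz]
    exact Finset.prod_congr rfl fun i _ => (indicator_of_mem (hz i (mem_univ i)) _).symm
  · obtain ⟨i, -, hi⟩ := not_forall₂.mp hz
    rw [indicator_of_notMem hz, eq_comm]
    exact Finset.prod_eq_zero (Finset.mem_univ i) (indicator_of_notMem hi _)

variable [∀ i, MeasurableSpace (α i)] (μ : ∀ i, Measure (α i)) [∀ i, IsProbabilityMeasure (μ i)]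
  {f : ∀ i, α i → ℝ≥0∞}

lemma lintegral_pi_prod_eq_prod (hf : ∀ i, Measurable (f i)) :
    ∫⁻ z, ∏ i, f i (z i) ∂Measure.pi μ = ∏ i, ∫⁻ y, f i y ∂μ i := by
  rw [lintegral_prod_eq_prod_lintegral_of_indepFun _ _ (iIndepFun_pi fun i => (hf i).aemeasurable)
    fun i => (hf i).comp (measurable_pi_apply i)]
  exact Finset.prod_congr rfl fun i _ => (measurePreserving_eval μ i).lintegral_comp (hf i)

lemma withDensity_pi_prod_apply_univ_pi (hf : ∀ i, Measurable (f i)) {s : ∀ i, Set (α i)}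
    (hs : ∀ i, MeasurableSet (s i)) :
    (Measure.pi μ).withDensity (fun z => ∏ i, f i (z i)) (univ.pi s) =
      ∏ i, (μ i).withDensity (f i) (s i) := by
  simp_rw [withDensity_apply _ (MeasurableSet.univ_pi hs), withDensity_apply _ (hs _),
    ← lintegral_indicator (MeasurableSet.univ_pi hs), ← lintegral_indicator (hs _),
    indicator_univ_pi_prod]
  exact lintegral_pi_prod_eq_prod μ fun i => (hf i).indicator (hs i)

end Pi

lemma gaussianReal_add_eq_withDensity (m c : ℝ) {v : ℝ≥0} (hv : v ≠ 0) :
    gaussianReal (m + c) v = (gaussianReal m v).withDensity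
      fun y => ENNReal.ofReal (Real.exp ((c * (y - m) - c ^ 2 / 2) / v)) := by
  rw [gaussianReal_of_var_ne_zero _ hv, gaussianReal_of_var_ne_zero _ hv,
    ← withDensity_mul _ (measurable_gaussianPDF _ _) (by fun_prop)]
  congr 1 with y
  rw [Pi.mul_apply, gaussianPDF, gaussianPDF, ← ENNReal.ofReal_mul (gaussianPDFReal_nonneg _ _ _)]
  simp only [gaussianPDFReal, mul_assoc, ← Real.exp_add]
  congr 3
  field_simp
  ring

lemma pi_gaussianReal_add_eq_withDensity {ι : Type*} [Fintype ι] (m c : ι → ℝ) {v : ℝ≥0}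
    (hv : v ≠ 0) :
    Measure.pi (fun i => gaussianReal (m i + c i) v) =
      (Measure.pi fun i => gaussianReal (m i) v).withDensity
        fun z => ∏ i, ENNReal.ofReal (Real.exp ((c i * (z i - m i) - c i ^ 2 / 2) / v)) :=
  Measure.pi_eq fun s hs => by
    rw [withDensity_pi_prod_apply_univ_pi _
      (f := fun i y => ENNReal.ofReal (Real.exp ((c i * (y - m i) - c i ^ 2 / 2) / v)))
      (fun i => by fun_prop) hs]
    simp_rw [← gaussianReal_add_eq_withDensity _ _ hv]

lemma gaussianReal_Ici_sub_sqrt_mul (m b : ℝ) {v : ℝ≥0} (hv : v ≠ 0) :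
    gaussianReal m v (Ici (m - √v * b)) = gaussianReal 0 1 (Iic b) := by
  have hstd : (gaussianReal m v).map (fun y => (m - y) / √v) = gaussianReal 0 1 := by
    rw [show (fun y => (m - y) / √v) = (· / √v) ∘ (m - ·) from rfl,
      ← Measure.map_map (by fun_prop) (by fun_prop), gaussianReal_map_const_sub,
      gaussianReal_map_div_const, sub_self, zero_div]
    congr
    ext
    simp [hv]
  rw [← hstd, Measure.map_apply (by fun_prop) measurableSet_Iic]
  congr 1 with y
  simp only [mem_Ici, mem_preimage, mem_Iic, div_le_iff₀ (by positivity : 0 < √(v : ℝ))]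
  constructor <;> intro h <;> linarith

lemma charFun_map_inner {E : Type*} [NormedAddCommGroup E] [InnerProductSpace ℝ E]
    [MeasurableSpace E] [OpensMeasurableSpace E] (μ : Measure E) (δ : E) (t : ℝ) :
    charFun (μ.map (⟪δ, ·⟫)) t = charFun μ (t • δ) := by
  rw [charFun_apply_real, charFun_apply, integral_map (by fun_prop) (by fun_prop)]
  simp [inner_smul_right, real_inner_comm, mul_comm]

section gaussPi

variable {d : ℕ} {σ : ℝ} {x δ : EuclideanSpace ℝ (Fin d)}

/-- In `gaussPi` the variance `⟨σ ^ 2, _⟩` is typed as a subtype rather than as `ℝ≥0`, which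
blocks instance search. -/
lemma gaussPi_eq_map_pi :
    gaussPi d σ x = (Measure.pi fun i => gaussianReal (x i) (‖σ‖₊ ^ 2)).map
      (MeasurableEquiv.toLp 2 (Fin d → ℝ)) := by
  obtain h : ‖σ‖₊ ^ 2 = ⟨σ ^ 2, sq_nonneg σ⟩ := NNReal.eq (by simp; rfl)
  rw [h]
  rfl

instance : IsProbabilityMeasure (gaussPi d σ x) := by
  rw [gaussPi_eq_map_pi]
  exact Measure.isProbabilityMeasure_map (by fun_prop)

lemma charFun_gaussPi (t : EuclideanSpace ℝ (Fin d)) :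
    charFun (gaussPi d σ x) t = Complex.exp (⟪t, x⟫ * Complex.I - σ ^ 2 * ‖t‖ ^ 2 / 2) := by
  rw [gaussPi_eq_map_pi, MeasurableEquiv.coe_toLp, charFun_pi]
  simp_rw [charFun_gaussianReal, ← Complex.exp_sum]
  rw [Finset.sum_sub_distrib, ← Finset.sum_mul, ← Finset.sum_div, ← Finset.mul_sum,
    ← Complex.ofReal_pow ‖t‖, EuclideanSpace.real_norm_sq_eq, PiLp.inner_apply, NNReal.coe_pow,
    coe_nnnorm, Real.norm_eq_abs, sq_abs]
  push_cast
  simp [mul_comm]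

lemma map_inner_gaussPi :
    (gaussPi d σ x).map (⟪δ, ·⟫) = gaussianReal ⟪δ, x⟫ (‖σ‖₊ ^ 2 * ‖δ‖₊ ^ 2) := by
  refine Measure.ext_of_charFun (funext fun t => ?_)
  rw [charFun_map_inner, charFun_gaussPi, charFun_gaussianReal, ← Complex.ofReal_pow ‖t • δ‖,
    norm_smul, mul_pow, Real.norm_eq_abs, sq_abs]
  simp only [real_inner_smul_left, NNReal.coe_mul, NNReal.coe_pow, coe_nnnorm, Real.norm_eq_abs,
    sq_abs]
  congr 1
  push_cast
  ring

lemma gaussPi_halfspace (hσ : 0 < σ) (hδ : δ ≠ 0) (b : ℝ) :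
    gaussPi d σ x {z | ⟪δ, x⟫ - σ * ‖δ‖ * b ≤ ⟪δ, z⟫} = gaussianReal 0 1 (Iic b) := by
  have hsqrt : √((‖σ‖₊ ^ 2 * ‖δ‖₊ ^ 2 : ℝ≥0) : ℝ) = σ * ‖δ‖ := by
    simp [Real.sqrt_sq hσ.le]
  rw [← gaussianReal_Ici_sub_sqrt_mul (v := ‖σ‖₊ ^ 2 * ‖δ‖₊ ^ 2) ⟪δ, x⟫ b
    (by simp [hσ.ne', hδ]), hsqrt, ← map_inner_gaussPi,
    Measure.map_apply (by fun_prop) measurableSet_Ici]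
  rfl

lemma gaussPi_add_eq_withDensity (hσ : σ ≠ 0) :
    gaussPi d σ (x + δ) = (gaussPi d σ x).withDensity
      fun z => ENNReal.ofReal (Real.exp ((⟪δ, z - x⟫ - ‖δ‖ ^ 2 / 2) / σ ^ 2)) := by
  rw [gaussPi_eq_map_pi, gaussPi_eq_map_pi]
  simp only [PiLp.add_apply]
  rw [pi_gaussianReal_add_eq_withDensity _ _ (by simpa using hσ),
    MeasurableEquiv.map_withDensity _ _ (by fun_prop)]
  congr 1 with z
  rw [Function.comp_apply, ← ENNReal.ofReal_prod_of_nonneg fun _ _ => (Real.exp_pos _).le,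
    ← Real.exp_sum]
  congr 2
  simp [PiLp.inner_apply, EuclideanSpace.real_norm_sq_eq, ← Finset.sum_div,
    Finset.sum_sub_distrib, mul_comm]

end gaussPi

theorem gaussian_shift_upper_bound_general
    (d : ℕ) (σ : ℝ) (hσ : 0 < σ)
    (S : Set (EuclideanSpace ℝ (Fin d))) (hS : MeasurableSet S)
    (x δ : EuclideanSpace ℝ (Fin d)) (b : ℝ)
    (h : (gaussPi d σ x S).toReal ≤ stdNormalCDF b) :
    (gaussPi d σ (x + δ) S).toReal ≤ stdNormalCDF (b + ‖δ‖ / σ) := by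
  obtain rfl | hδ := eq_or_ne δ 0
  · simpa using h
  set H := {z | ⟪δ, x⟫ - σ * ‖δ‖ * b ≤ ⟪δ, z⟫}
  have hH : MeasurableSet H := measurableSet_le (by fun_prop) (by fun_prop)
  have hSH : gaussPi d σ x S ≤ gaussPi d σ x H := by
    rw [gaussPi_halfspace hσ hδ b]
    exact (ENNReal.toReal_le_toReal (measure_ne_top _ _) (measure_ne_top _ _)).mp h
  have hthreshold : ⟪δ, x + δ⟫ - σ * ‖δ‖ * (b + ‖δ‖ / σ) = ⟪δ, x⟫ - σ * ‖δ‖ * b := by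
    rw [inner_add_right, real_inner_self_eq_norm_sq]
    field_simp
    ring
  have hNP : gaussPi d σ (x + δ) S ≤ gaussPi d σ (x + δ) H := by
    rw [gaussPi_add_eq_withDensity hσ.ne']
    refine withDensity_apply_le_of_superlevelSet hS hH
      (c := ENNReal.ofReal (Real.exp ((-(σ * ‖δ‖ * b) - ‖δ‖ ^ 2 / 2) / σ ^ 2)))
      (fun z hz => ?_) (fun z hz => ?_) hSH
    all_goals
      simp only [H, mem_ofPred_eq, not_le] at hz
      gcongr
      rw [inner_sub_right]
      linarith
  calc (gaussPi d σ (x + δ) S).toReal ≤ (gaussPi d σ (x + δ) H).toReal :=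
        ENNReal.toReal_mono (measure_ne_top _ _) hNP
    _ = stdNormalCDF (b + ‖δ‖ / σ) := by
        rw [stdNormalCDF, ← gaussPi_halfspace (x := x + δ) hσ hδ, hthreshold]

theorem gaussian_shift_upper_bound
    (d : ℕ) (hd : 0 < d) (σ : ℝ) (hσ : 0 < σ)
    (S : Set (EuclideanSpace ℝ (Fin d))) (hS : MeasurableSet S)
    (x δ : EuclideanSpace ℝ (Fin d)) (b : ℝ)
    (h : (gaussPi d σ x S).toReal ≤ stdNormalCDF b) :
    (gaussPi d σ (x + δ) S).toReal ≤ stdNormalCDF (b + ‖δ‖ / σ) :=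
  gaussian_shift_upper_bound_general d σ hσ S hS x δ b h
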